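/- For n = 2, the 4×4 matrix m_1(μ, μ+1/2) (the vortex block evaluated at ν = μ + 1/2) has eigenvalues 0, 3μ, and μ² + 1/2 ± √((μ²+1/2)² + μ(μ+2)(2μ+1)). In particular, for μ < −2 it has exactly two positive eigenvalues, one zero eigenvalue and one negative eigenvalue. -/

import Mathlib

open Matrix Complex Polynomial

/-- The `k = 1` vortex block for `n = 2`. -/
noncomputable def m₁n2 (μ ν : ℝ) : Matrix (Fin 4) (Fin 4) ℂ :=
  !![(μ * (μ + 5 / 2) : ℝ), -(Complex.I * ν * μ), (-(Real.sqrt 2 * μ) : ℝ), 0;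
     Complex.I * ν * μ, (μ * (μ - 3 / 2) : ℝ), 0, (Real.sqrt 2 * μ : ℝ);
     (-(Real.sqrt 2 * μ) : ℝ), 0, (2 * μ + 1 / 2 : ℝ), -(Complex.I * ν);
     0, (Real.sqrt 2 * μ : ℝ), Complex.I * ν, (1 / 2 : ℝ)]

/-!
Expanding `det (x - m₁)` along the first row, the entries `I` and `√2` only enter squared, and on
the curve `ν = μ + 1/2` the characteristic polynomial factors as
`X (X - 3μ) (X² - 2aX - b)` with `a = μ² + 1/2` and `b = μ(μ+2)(2μ+1)`. The quadratic factor has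
the real roots `a ± √(a² + b)`, its discriminant being nonnegative for every `μ`. For `μ < -2` we
have `b < 0`, so `√(a² + b) < a` and both roots are positive.
-/

theorem Polynomial.X_sub_C_add_mul_X_sub_C_sub {R : Type*} [CommRing R] {a s b : R}
    (hs : s ^ 2 = a ^ 2 + b) :
    (X - C (a + s)) * (X - C (a - s)) = X ^ 2 - C (2 * a) * X - C b := by
  obtain rfl : b = s ^ 2 - a ^ 2 := by rw [hs]; ring
  simp only [map_add, map_sub, map_mul, map_pow, map_ofNat]
  ring

theorem Real.sub_sqrt_sq_add_pos {a b : ℝ} (ha : 0 < a) (hb : b < 0) : 0 < a - √(a ^ 2 + b) :=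
  sub_pos.2 <| (Real.sqrt_lt' ha).2 (by linarith)

theorem charpoly_m₁n2_on_curve (μ : ℝ) :
    (m₁n2 μ (μ + 1 / 2)).charpoly =
      X * (X - C (3 * μ : ℂ)) *
        (X ^ 2 - C (2 * (μ ^ 2 + 1 / 2) : ℂ) * X - C (μ * (μ + 2) * (2 * μ + 1) : ℂ)) := by
  have h2 : ((√2 : ℝ) : ℂ) ^ 2 = 2 := by norm_cast; simp
  have h4 : ((√2 : ℝ) : ℂ) ^ 4 = 4 := by rw [show 4 = 2 * 2 from rfl, pow_mul, h2]; norm_num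
  refine Polynomial.funext fun x => ?_
  rw [eval_charpoly, det_succ_row_zero]
  simp only [m₁n2, Fin.sum_univ_succ, det_fin_three, Fin.succAbove, submatrix_apply,
    Matrix.sub_apply, scalar_apply, of_apply, Fin.reduceSucc, Fin.reduceCastSucc, Fin.reduceLT,
    ↓reduceIte, Fin.reduceEq, diagonal_apply_eq, diagonal_apply_ne, ne_eq, not_false_eq_true,
    Fin.coe_ofNat_eq_mod, cons_val, eval_mul, eval_sub, eval_pow, eval_X, eval_C]
  push_cast
  ring_nf
  simp only [I_sq, I_pow_four, h2, h4]
  ring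

theorem discriminant_on_curve_nonneg (μ : ℝ) :
    0 ≤ (μ ^ 2 + 1 / 2) ^ 2 + μ * (μ + 2) * (2 * μ + 1) := by
  have h : (μ ^ 2 + 1 / 2) ^ 2 + μ * (μ + 2) * (2 * μ + 1) =
      (μ ^ 2 + μ) ^ 2 + 5 * (μ + 1 / 5) ^ 2 + 1 / 20 := by ring
  rw [h]
  positivity

theorem eigenvalues_m1_n2_on_curve (μ : ℝ) :
    (m₁n2 μ (μ + 1 / 2)).charpoly =
      (X - C 0) * (X - C ((3 * μ : ℝ) : ℂ)) *
      (X - C ((μ ^ 2 + 1 / 2 +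
        Real.sqrt ((μ ^ 2 + 1 / 2) ^ 2 + μ * (μ + 2) * (2 * μ + 1)) : ℝ) : ℂ)) *
      (X - C ((μ ^ 2 + 1 / 2 -
        Real.sqrt ((μ ^ 2 + 1 / 2) ^ 2 + μ * (μ + 2) * (2 * μ + 1)) : ℝ) : ℂ)) ∧
    (μ < -2 →
      3 * μ < 0 ∧
      0 < μ ^ 2 + 1 / 2 - Real.sqrt ((μ ^ 2 + 1 / 2) ^ 2 + μ * (μ + 2) * (2 * μ + 1)) ∧
      0 < μ ^ 2 + 1 / 2 + Real.sqrt ((μ ^ 2 + 1 / 2) ^ 2 + μ * (μ + 2) * (2 * μ + 1))) := by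
  set a := μ ^ 2 + 1 / 2
  set b := μ * (μ + 2) * (2 * μ + 1)
  have ha : 0 < a := by positivity
  refine ⟨?_, fun hμ => ⟨by linarith, ?_, by positivity⟩⟩
  · have hs : ((√(a ^ 2 + b) : ℝ) : ℂ) ^ 2 = (a : ℂ) ^ 2 + b := by
      norm_cast; exact Real.sq_sqrt (discriminant_on_curve_nonneg μ)
    rw [C_0, sub_zero, mul_assoc _ (X - C _), ofReal_add, ofReal_sub,
      X_sub_C_add_mul_X_sub_C_sub hs, charpoly_m₁n2_on_curve]
    simp only [a, b]
    push_cast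
    rfl
  · have hb : b < 0 :=
      mul_neg_of_pos_of_neg (mul_pos_of_neg_of_neg (by linarith) (by linarith)) (by linarith)
    exact Real.sub_sqrt_sq_add_pos ha hb
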